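/- arXiv:1904.02235 — 3 statements merged into one kernel-verified Lean document; each statement's English description precedes it below -/
import Mathlib

section
/- Suppose every observed datum dⱼ has zero G-regret for its true type θⱼ, i.e., dⱼ maximizes a ↦ E[u^G(a, D₋ⱼ, θⱼ)] over A. Then in every mixed Nash equilibrium of the revelation game, every data-player's expected utility equals 0; equivalently, every reported pair (θ̂, â) in the support of any data-player j's equilibrium strategy satisfies Regret^G_j(θ̂) = 0 and Regret^{G'}_j(â, θ̂, σ₋ⱼ) = 0, where σ₋ⱼ is the equilibrium mixed profile of the other data-players. -/
/-! A data-player can always report the true type `trueθ j` together with a best response in `G'`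
to the others' profile; this pure strategy has zero regret in both games, so its utility `0` is the
largest any pair can achieve (regrets are nonnegative). An equilibrium strategy must therefore earn
expected utility `0`, and since every pair earns at most `0`, each pair it charges with positive
probability earns exactly `0`, i.e. has both regrets zero. -/

open Finset

/-- The multiset of the other observed data points. -/
def othersData {A : Type} {m : ℕ} (d : Fin m → A) (j : Fin m) : Multiset A :=
  (Finset.univ : Finset {k : Fin m // k ≠ j}).val.map fun k => d k.1

/-- The `G`-regret of a reported type `th` for data point `j`: the gap between the best
achievable utility against the other observed data points and the utility of the
observed action `d j`. -/
noncomputable def regretG {Θ A : Type} [Fintype A] [Nonempty A] {m : ℕ}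
    (uG : A → Multiset A → Θ → ℝ) (d : Fin m → A) (j : Fin m) (th : Θ) : ℝ :=
  (Finset.univ.sup' Finset.univ_nonempty fun a => uG a (othersData d j) th)
    - uG (d j) (othersData d j) th

/-- The expected `G'`-utility of counterfactual action `a` with reported type `th`,
against the mixed profile `σ` of the other data-players' reported type–action pairs. -/
noncomputable def expUG' {Θ A' : Type} [Fintype Θ] [Fintype A'] {m : ℕ}
    (uG' : A' → Multiset A' → Θ → ℝ) (σ : Fin m → Θ × A' → ℝ) (j : Fin m)
    (a : A') (th : Θ) : ℝ :=
  ∑ p : {k : Fin m // k ≠ j} → Θ × A',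
    (∏ k, σ k.1 (p k)) *
      uG' a ((Finset.univ : Finset {k : Fin m // k ≠ j}).val.map fun k => (p k).2) th

/-- The `G'`-regret of a reported pair (type `th`, action `ahat`) for data-player `j`
against the mixed profile `σ` of the other data-players. -/
noncomputable def regretG' {Θ A' : Type} [Fintype Θ] [Fintype A'] [Nonempty A'] {m : ℕ}
    (uG' : A' → Multiset A' → Θ → ℝ) (σ : Fin m → Θ × A' → ℝ) (j : Fin m)
    (ahat : A') (th : Θ) : ℝ :=
  (Finset.univ.sup' Finset.univ_nonempty fun a => expUG' uG' σ j a th)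
    - expUG' uG' σ j ahat th

/-- The revelation-game utility of data-player `j` reporting the pair `x`: the negative
of the maximum of the `G`-regret of the reported type and the `G'`-regret of the
reported pair against the others' mixed profile `σ`. -/
noncomputable def revU {Θ A A' : Type} [Fintype Θ] [Fintype A] [Fintype A']
    [Nonempty A] [Nonempty A'] {m : ℕ}
    (uG : A → Multiset A → Θ → ℝ) (uG' : A' → Multiset A' → Θ → ℝ)
    (d : Fin m → A) (σ : Fin m → Θ × A' → ℝ) (j : Fin m) (x : Θ × A') : ℝ :=
  -max (regretG uG d j x.1) (regretG' uG' σ j x.2 x.1)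

/-- A probability mass function on a finite set. -/
def IsPMF {X : Type} [Fintype X] (p : X → ℝ) : Prop :=
  (∀ x, 0 ≤ p x) ∧ ∑ x, p x = 1

/-- The expected revelation-game utility of data-player `j` playing the mixed strategy
`τ` against the profile `σ`. -/
noncomputable def expRevU {Θ A A' : Type} [Fintype Θ] [Fintype A] [Fintype A']
    [Nonempty A] [Nonempty A'] {m : ℕ}
    (uG : A → Multiset A → Θ → ℝ) (uG' : A' → Multiset A' → Θ → ℝ)
    (d : Fin m → A) (σ : Fin m → Θ × A' → ℝ) (j : Fin m) (τ : Θ × A' → ℝ) : ℝ :=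
  ∑ x, τ x * revU uG uG' d σ j x

/-- A mixed Nash equilibrium of the revelation game: a profile of probability mass
functions over type–action pairs, one per data-player, such that each player's mixed
strategy maximizes their expected revelation-game utility given the others'. -/
def IsMixedNE {Θ A A' : Type} [Fintype Θ] [Fintype A] [Fintype A']
    [Nonempty A] [Nonempty A'] {m : ℕ}
    (uG : A → Multiset A → Θ → ℝ) (uG' : A' → Multiset A' → Θ → ℝ)
    (d : Fin m → A) (σ : Fin m → Θ × A' → ℝ) : Prop :=
  (∀ j, IsPMF (σ j)) ∧
  ∀ j (τ : Θ × A' → ℝ), IsPMF τ →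
    expRevU uG uG' d σ j τ ≤ expRevU uG uG' d σ j (σ j)

section FiniteExpectation

variable {X : Type} [Fintype X]

theorem isPMF_pi_single [DecidableEq X] (x : X) : IsPMF (Pi.single x 1 : X → ℝ) :=
  ⟨fun y => by by_cases h : y = x <;> simp [h], by simp⟩

theorem sum_mul_nonpos_of_nonneg_of_nonpos {τ f : X → ℝ} (hτ : ∀ x, 0 ≤ τ x)
    (hf : ∀ x, f x ≤ 0) : ∑ x, τ x * f x ≤ 0 :=
  Finset.sum_nonpos fun x _ => mul_nonpos_of_nonneg_of_nonpos (hτ x) (hf x)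

theorem sum_mul_eq_zero_of_maximizes {τ f : X → ℝ} (hτ : ∀ x, 0 ≤ τ x) (hf : ∀ x, f x ≤ 0)
    {x₀ : X} (hx₀ : f x₀ = 0) (hmax : ∀ τ', IsPMF τ' → ∑ x, τ' x * f x ≤ ∑ x, τ x * f x) :
    ∑ x, τ x * f x = 0 := by
  classical
  have hpure : ∑ x, (Pi.single x₀ 1 : X → ℝ) x * f x = 0 := by simp [Pi.single_apply, hx₀]
  exact le_antisymm (sum_mul_nonpos_of_nonneg_of_nonpos hτ hf)
    (hpure ▸ hmax _ (isPMF_pi_single x₀))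

theorem eq_zero_of_sum_mul_eq_zero {τ f : X → ℝ} (hτ : ∀ x, 0 ≤ τ x) (hf : ∀ x, f x ≤ 0)
    (hsum : ∑ x, τ x * f x = 0) {x : X} (hx : 0 < τ x) : f x = 0 := by
  have hterm : τ x * f x = 0 := (Finset.sum_eq_zero_iff_of_nonpos fun y _ =>
    mul_nonpos_of_nonneg_of_nonpos (hτ y) (hf y)).1 hsum x (Finset.mem_univ x)
  exact (mul_eq_zero.1 hterm).resolve_left hx.ne'

end FiniteExpectation

theorem regretG_nonneg {Θ A : Type} [Fintype A] [Nonempty A] {m : ℕ}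
    (uG : A → Multiset A → Θ → ℝ) (d : Fin m → A) (j : Fin m) (th : Θ) :
    0 ≤ regretG uG d j th :=
  sub_nonneg.2 (Finset.le_sup' (fun a => uG a (othersData d j) th) (Finset.mem_univ (d j)))

theorem regretG_eq_zero_of_forall_le {Θ A : Type} [Fintype A] [Nonempty A] {m : ℕ}
    {uG : A → Multiset A → Θ → ℝ} {d : Fin m → A} {j : Fin m} {th : Θ}
    (hbest : ∀ a, uG a (othersData d j) th ≤ uG (d j) (othersData d j) th) :
    regretG uG d j th = 0 :=
  le_antisymm (sub_nonpos.2 (Finset.sup'_le _ _ fun a _ => hbest a)) (regretG_nonneg uG d j th)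

theorem regretG'_nonneg {Θ A' : Type} [Fintype Θ] [Fintype A'] [Nonempty A'] {m : ℕ}
    (uG' : A' → Multiset A' → Θ → ℝ) (σ : Fin m → Θ × A' → ℝ) (j : Fin m) (ahat : A')
    (th : Θ) : 0 ≤ regretG' uG' σ j ahat th :=
  sub_nonneg.2 (Finset.le_sup' (fun a => expUG' uG' σ j a th) (Finset.mem_univ ahat))

theorem exists_regretG'_eq_zero {Θ A' : Type} [Fintype Θ] [Fintype A'] [Nonempty A'] {m : ℕ}
    (uG' : A' → Multiset A' → Θ → ℝ) (σ : Fin m → Θ × A' → ℝ) (j : Fin m) (th : Θ) :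
    ∃ a, regretG' uG' σ j a th = 0 := by
  obtain ⟨a, -, ha⟩ :=
    Finset.exists_mem_eq_sup' Finset.univ_nonempty fun a => expUG' uG' σ j a th
  exact ⟨a, by rw [regretG', ha, sub_self]⟩

section RevelationUtility

variable {Θ A A' : Type} [Fintype Θ] [Fintype A] [Fintype A'] [Nonempty A] [Nonempty A'] {m : ℕ}
  {uG : A → Multiset A → Θ → ℝ} {uG' : A' → Multiset A' → Θ → ℝ} {d : Fin m → A}
  {σ : Fin m → Θ × A' → ℝ}

theorem revU_nonpos (j : Fin m) (x : Θ × A') : revU uG uG' d σ j x ≤ 0 :=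
  neg_nonpos.2 ((regretG_nonneg uG d j x.1).trans (le_max_left _ _))

theorem revU_eq_zero_iff {j : Fin m} {x : Θ × A'} :
    revU uG uG' d σ j x = 0 ↔ regretG uG d j x.1 = 0 ∧ regretG' uG' σ j x.2 x.1 = 0 := by
  rw [revU, neg_eq_zero, max_eq_iff]
  have h := regretG_nonneg uG d j x.1
  have h' := regretG'_nonneg uG' σ j x.2 x.1
  constructor
  · rintro (⟨hG, hle⟩ | ⟨hG', hle⟩) <;> constructor <;> linarith
  · rintro ⟨hG, hG'⟩
    exact Or.inl ⟨hG, hG'.le.trans hG.ge⟩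

theorem exists_revU_eq_zero {j : Fin m} {th : Θ}
    (hbest : ∀ a, uG a (othersData d j) th ≤ uG (d j) (othersData d j) th) :
    ∃ x, revU uG uG' d σ j x = 0 := by
  obtain ⟨a, ha⟩ := exists_regretG'_eq_zero uG' σ j th
  exact ⟨(th, a), revU_eq_zero_iff.2 ⟨regretG_eq_zero_of_forall_le hbest, ha⟩⟩

end RevelationUtility

/-- If every observed datum `d j` has zero `G`-regret for its true type `trueθ j`
(i.e. `d j` maximizes the `G`-utility against the other data points for type
`trueθ j`), then in every mixed Nash equilibrium of the revelation game every
data-player's expected utility equals `0`; equivalently, every reported pair in the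
support of any data-player's equilibrium strategy has zero `G`-regret and zero
`G'`-regret. -/
theorem revelation_game_equilibrium_zero_regret
    (Θ A A' : Type) [Fintype Θ] [Fintype A] [Fintype A']
    [Nonempty A] [Nonempty A']
    (m : ℕ) (uG : A → Multiset A → Θ → ℝ) (uG' : A' → Multiset A' → Θ → ℝ)
    (d : Fin m → A) (trueθ : Fin m → Θ)
    (hzero : ∀ j a, uG a (othersData d j) (trueθ j) ≤ uG (d j) (othersData d j) (trueθ j))
    (σ : Fin m → Θ × A' → ℝ) (hNE : IsMixedNE uG uG' d σ) :
    (∀ j, expRevU uG uG' d σ j (σ j) = 0) ∧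
    (∀ j (th : Θ) (ahat : A'), 0 < σ j (th, ahat) →
      regretG uG d j th = 0 ∧ regretG' uG' σ j ahat th = 0) := by
  obtain ⟨hpmf, hbest⟩ := hNE
  have hvalue : ∀ j, expRevU uG uG' d σ j (σ j) = 0 := by
    intro j
    obtain ⟨_, hx₀⟩ := exists_revU_eq_zero (uG' := uG') (σ := σ) (hzero j)
    exact sum_mul_eq_zero_of_maximizes (hpmf j).1 (revU_nonpos j) hx₀ (hbest j)
  refine ⟨hvalue, fun j th ahat hpos => ?_⟩
  exact revU_eq_zero_iff.1 <|
    eq_zero_of_sum_mul_eq_zero (hpmf j).1 (revU_nonpos j) (hvalue j) hpos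
end

section
/- Let ε > 0 and suppose a run of revelation game fictitious play converges, i.e., the empirical mixed strategies σ̄ᵗ converge (pointwise on the finite set (Θ × A')^m) to a mixed profile σ*. Then σ* is an ε-Bayesian Nash equilibrium of the revelation game: for every data-player j, every pair (θ, a) in the support of σ*ⱼ, and every alternative pair (θ', a') ∈ Θ × A', E_{σ*₋ⱼ}[U^rev_j(θ, a, ·)] ≥ E_{σ*₋ⱼ}[U^rev_j(θ', a', ·)] − ε. -/
open Finset Filter

/-- The empirical (uniform) distribution of data-player `j`'s choices up to time `t`
along the fictitious-play sequence `x`. -/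
noncomputable def empirical {X : Type} [DecidableEq X] {m : ℕ}
    (x : ℕ → Fin m → X) (t : ℕ) (j : Fin m) (y : X) : ℝ :=
  (((Finset.range (t + 1)).filter fun s => x s j = y).card : ℝ) / (t + 1)

/-- The expected value of the evaluation function `V` when data-player `j` plays the
pure pair `y` and the other data-players play the mixed profile `σ`. -/
noncomputable def expV {Θ A' : Type} [Fintype Θ] [Fintype A'] {m : ℕ}
    (V : (Fin m → Θ × A') → ℝ) (σ : Fin m → Θ × A' → ℝ) (j : Fin m) (y : Θ × A') : ℝ :=
  ∑ p : {k : Fin m // k ≠ j} → Θ × A',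
    (∏ k, σ k.1 (p k)) * V (fun i => if h : i = j then y else p ⟨i, h⟩)

/-- The expected value of the evaluation function `V` under the mixed profile `σ`. -/
noncomputable def expVfull {Θ A' : Type} [Fintype Θ] [Fintype A'] {m : ℕ}
    (V : (Fin m → Θ × A') → ℝ) (σ : Fin m → Θ × A' → ℝ) : ℝ :=
  ∑ p : Fin m → Θ × A', (∏ j, σ j (p j)) * V p

/-- If a run of revelation game fictitious play (with ε-best responses at every step,
selecting a `V`-optimizing pair among them, pessimistically `α = -1` or optimistically
`α = 1`) converges, i.e. the empirical mixed strategies converge pointwise to a mixed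
profile `σstar`, then `σstar` is an `ε`-Bayesian Nash equilibrium of the revelation
game: every pair in the support of any data-player's limit strategy is an `ε`-best
response to the others' limit profile. -/
theorem RFP_limit_is_eps_BNE
    (Θ A A' : Type) [Fintype Θ] [Fintype A] [Fintype A']
    [Nonempty Θ] [Nonempty A] [Nonempty A'] [DecidableEq Θ] [DecidableEq A']
    (m : ℕ) (uG : A → Multiset A → Θ → ℝ) (uG' : A' → Multiset A' → Θ → ℝ)
    (d : Fin m → A) (V : (Fin m → Θ × A') → ℝ)
    (ε : ℝ) (hε : 0 < ε)
    (α : ℝ) (hα : α = 1 ∨ α = -1)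
    -- the fictitious-play sequence of pure profiles
    (x : ℕ → Fin m → Θ × A')
    -- each step selects, among the ε-best responses to the empirical history, a pair
    -- optimizing the expected value of V (pessimistic or optimistic according to α)
    (hRFP : ∀ t j,
      ((Finset.univ.sup' Finset.univ_nonempty fun z => revU uG uG' d (empirical x t) j z)
          - revU uG uG' d (empirical x t) j (x (t + 1) j) ≤ ε) ∧
      (∀ y : Θ × A',
        ((Finset.univ.sup' Finset.univ_nonempty fun z => revU uG uG' d (empirical x t) j z)
            - revU uG uG' d (empirical x t) j y ≤ ε) →
        α * expV V (empirical x t) j y ≤ α * expV V (empirical x t) j (x (t + 1) j)))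
    -- the empirical mixed strategies converge to σstar
    (σstar : Fin m → Θ × A' → ℝ)
    (hconv : ∀ j y, Tendsto (fun t => empirical x t j y) atTop (nhds (σstar j y))) :
    ∀ j (th : Θ) (a : A'), 0 < σstar j (th, a) →
      ∀ (th' : Θ) (a' : A'),
        revU uG uG' d σstar j (th', a') - ε ≤ revU uG uG' d σstar j (th, a) := by
  intro j th a hpos th' a'
  -- continuity of revU in the mixed profile, along the empirical sequence
  have cont : ∀ z : Θ × A',
      Tendsto (fun t => revU uG uG' d (empirical x t) j z) atTop
        (nhds (revU uG uG' d σstar j z)) := by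
    intro z
    have hexp : ∀ b : A',
        Tendsto (fun t => expUG' uG' (empirical x t) j b z.1) atTop
          (nhds (expUG' uG' σstar j b z.1)) := by
      intro b
      unfold expUG'
      apply tendsto_finset_sum
      intro p _
      exact (tendsto_finset_prod _ (fun k _ => hconv k.1 (p k))).mul tendsto_const_nhds
    have hreg : Tendsto (fun t => regretG' uG' (empirical x t) j z.2 z.1) atTop
        (nhds (regretG' uG' σstar j z.2 z.1)) := by
      unfold regretG'
      exact (Filter.Tendsto.finset_sup'_nhds_apply Finset.univ_nonempty
        (fun b _ => hexp b)).sub (hexp z.2)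
    unfold revU
    exact (tendsto_const_nhds.max hreg).neg
  -- (th, a) is played infinitely often
  have hfreq : ∃ᶠ t in atTop, x (t + 1) j = (th, a) := by
    by_contra hc
    rw [Filter.not_frequently] at hc
    obtain ⟨N, hN⟩ := Filter.eventually_atTop.1 hc
    have hbound : ∀ t : ℕ,
        empirical x t j (th, a) ≤ ((N : ℝ) + 1) / ((t : ℝ) + 1) := by
      intro t
      have hsub : ((Finset.range (t + 1)).filter fun s => x s j = (th, a)) ⊆
          Finset.range (N + 1) := by
        intro s hs
        simp only [Finset.mem_filter, Finset.mem_range] at hs ⊢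
        by_contra hsN
        push_neg at hsN
        obtain ⟨s', rfl⟩ : ∃ s', s = s' + 1 :=
          ⟨s - 1, by omega⟩
        exact hN s' (by omega) hs.2
      have hcard := Finset.card_le_card hsub
      rw [Finset.card_range] at hcard
      unfold empirical
      apply div_le_div_of_nonneg_right ?_ (by positivity) |>.trans_eq rfl
      · exact_mod_cast hcard
    have htend0 : Tendsto (fun t : ℕ => ((N : ℝ) + 1) / ((t : ℝ) + 1)) atTop (nhds 0) :=
      Filter.Tendsto.div_atTop tendsto_const_nhds
        (tendsto_atTop_add_const_right atTop 1 tendsto_natCast_atTop_atTop)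
    have hle : σstar j (th, a) ≤ 0 :=
      le_of_tendsto_of_tendsto' (hconv j (th, a)) htend0 hbound
    linarith
  obtain ⟨φ, hmono, hφ⟩ := Filter.extraction_of_frequently_atTop hfreq
  -- the step inequality along the subsequence
  have hstep : ∀ n : ℕ,
      revU uG uG' d (empirical x (φ n)) j (th', a') - ε ≤
        revU uG uG' d (empirical x (φ n)) j (th, a) := by
    intro n
    have h1 := (hRFP (φ n) j).1
    rw [hφ n] at h1
    have h2 : revU uG uG' d (empirical x (φ n)) j (th', a') ≤
        Finset.univ.sup' Finset.univ_nonempty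
          fun z => revU uG uG' d (empirical x (φ n)) j z :=
      Finset.le_sup' _ (Finset.mem_univ (th', a'))
    linarith
  -- pass to the limit
  exact le_of_tendsto_of_tendsto'
    (((cont (th', a')).comp hmono.tendsto_atTop).sub_const ε)
    ((cont (th, a)).comp hmono.tendsto_atTop) hstep
end

section
/- Fix Δ ∈ [0,1] and θ ∈ [0,1], and let U_Δ(b) denote the expected utility of a bid b against an opponent whose type T is uniform on [0,1] and who bids T − Δ, i.e., U_Δ(b) = ∫₀^{min(1, max(0, b+Δ))} (θ − t + Δ) dt. Then: (i) U_Δ(b) ≤ U_Δ(θ) for every bid b ∈ ℝ (truthful bidding is optimal); (ii) U_Δ(θ) − U_Δ(θ − Δ) ≤ Δ²/2, so the profile in which every type θ bids θ − Δ is a (Δ²/2)-Bayesian Nash equilibrium of the 2-player second-price auction with uniform types; and (iii) the expected revenue of this shifted profile, E[min(T₁, T₂)] − Δ for T₁, T₂ i.i.d. uniform on [0,1], equals 1/3 − Δ, a decrease of exactly Δ from the truthful-equilibrium revenue 1/3. -/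
open intervalIntegral

lemma lin_int (c m : ℝ) : (∫ t in (0:ℝ)..m, (c - t)) = c*m - m^2/2 := by
  rw [intervalIntegral.integral_sub intervalIntegrable_const intervalIntegrable_id]
  simp [integral_id]
  ring

lemma min_int : ∀ t₁ ∈ Set.uIcc (0:ℝ) 1,
    (∫ t₂ in (0:ℝ)..1, min t₁ t₂) = t₁ - t₁^2/2 := by
  intro t₁ ht
  rw [Set.uIcc_of_le (by norm_num)] at ht
  obtain ⟨h0, h1⟩ := ht
  have i1 : IntervalIntegrable (fun t₂ : ℝ => min t₁ t₂) MeasureTheory.volume 0 t₁ :=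
    Continuous.intervalIntegrable (continuous_const.min continuous_id) _ _
  have i2 : IntervalIntegrable (fun t₂ : ℝ => min t₁ t₂) MeasureTheory.volume t₁ 1 :=
    Continuous.intervalIntegrable (continuous_const.min continuous_id) _ _
  rw [← intervalIntegral.integral_add_adjacent_intervals i1 i2]
  have e1 : (∫ t₂ in (0:ℝ)..t₁, min t₁ t₂) = ∫ t₂ in (0:ℝ)..t₁, t₂ := by
    apply intervalIntegral.integral_congr
    intro x hx
    rw [Set.uIcc_of_le h0] at hx
    exact min_eq_right hx.2
  have e2 : (∫ t₂ in t₁..(1:ℝ), min t₁ t₂) = ∫ t₂ in t₁..(1:ℝ), t₁ := by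
    apply intervalIntegral.integral_congr
    intro x hx
    rw [Set.uIcc_of_le h1] at hx
    exact min_eq_left hx.1
  rw [e1, e2]
  simp [integral_id]
  ring

/-- In a 2-player second-price auction where the opponent's type `T` is uniform on
`[0,1]` and the opponent bids `T - Δ`, the expected utility of a bid `b` for a bidder
with valuation `θ` is `U b = ∫ t in 0..min 1 (max 0 (b+Δ)), (θ - t + Δ)`.  Then
(i) truthful bidding is optimal, (ii) the downward-shifted bid `θ - Δ` has regret at
most `Δ²/2`, so the profile in which every type `θ` bids `θ - Δ` is a `(Δ²/2)`-Bayesian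
Nash equilibrium, and (iii) the expected revenue of the shifted profile is
`E[min(T₁,T₂)] - Δ = 1/3 - Δ`, a decrease of exactly `Δ` from the truthful revenue `1/3`. -/
theorem shifted_second_price_eps_equilibrium_and_revenue
    (Δ θ : ℝ) (hΔ : Δ ∈ Set.Icc (0:ℝ) 1) (hθ : θ ∈ Set.Icc (0:ℝ) 1)
    (U : ℝ → ℝ)
    (hU : ∀ b, U b = ∫ t in (0:ℝ)..(min 1 (max 0 (b + Δ))), (θ - t + Δ)) :
    (∀ b : ℝ, U b ≤ U θ) ∧
    (U θ - U (θ - Δ) ≤ Δ ^ 2 / 2) ∧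
    (∀ b : ℝ, U b ≤ U (θ - Δ) + Δ ^ 2 / 2) ∧
    ((∫ t₁ in (0:ℝ)..1, ∫ t₂ in (0:ℝ)..1, (min t₁ t₂ - Δ)) = 1 / 3 - Δ) ∧
    ((∫ t₁ in (0:ℝ)..1, ∫ t₂ in (0:ℝ)..1, min t₁ t₂) = 1 / 3) := by
  obtain ⟨hΔ0, hΔ1⟩ := hΔ
  obtain ⟨hθ0, hθ1⟩ := hθ
  have hUf : ∀ b, U b = (θ+Δ) * (min 1 (max 0 (b+Δ))) - (min 1 (max 0 (b+Δ)))^2/2 := by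
    intro b
    rw [hU b]
    have : (fun t => θ - t + Δ) = fun t => (θ+Δ) - t := by funext t; ring
    rw [this, lin_int]
  have quad : ∀ m ∈ Set.Icc (0:ℝ) 1,
      (θ+Δ)*m - m^2/2 ≤ (θ+Δ) * (min 1 (θ+Δ)) - (min 1 (θ+Δ))^2/2 := by
    intro m ⟨hm0, hm1⟩
    rcases le_total (θ+Δ) 1 with h | h
    · rw [min_eq_right h]
      nlinarith [sq_nonneg (θ+Δ-m)]
    · rw [min_eq_left h]
      nlinarith [sq_nonneg (1-m)]
  have mem : ∀ b : ℝ, min 1 (max 0 (b+Δ)) ∈ Set.Icc (0:ℝ) 1 := by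
    intro b
    exact ⟨le_min (by norm_num) (le_max_left _ _), min_le_left _ _⟩
  have hUθ : U θ = (θ+Δ) * (min 1 (θ+Δ)) - (min 1 (θ+Δ))^2/2 := by
    rw [hUf θ, max_eq_right (by linarith)]
  have part1 : ∀ b : ℝ, U b ≤ U θ := by
    intro b
    rw [hUf b, hUθ]
    exact quad _ (mem b)
  have hUshift : U (θ - Δ) = (θ+Δ)*θ - θ^2/2 := by
    rw [hUf (θ-Δ)]
    have h : θ - Δ + Δ = θ := by ring
    rw [h, max_eq_right hθ0, min_eq_right hθ1]
  have part2 : U θ - U (θ - Δ) ≤ Δ ^ 2 / 2 := by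
    rw [hUθ, hUshift]
    rcases le_total (θ+Δ) 1 with h | h
    · rw [min_eq_right h]; nlinarith
    · rw [min_eq_left h]; nlinarith [sq_nonneg (θ+Δ-1)]
  have part3 : ∀ b : ℝ, U b ≤ U (θ - Δ) + Δ ^ 2 / 2 := by
    intro b; linarith [part1 b, part2]
  have poly : (∫ t in (0:ℝ)..1, (t - t^2/2)) = 1 / 3 := by
    rw [intervalIntegral.integral_sub intervalIntegrable_id
      (((continuous_pow 2).div_const 2).intervalIntegrable _ _)]
    simp [integral_id, intervalIntegral.integral_div, integral_pow]
    norm_num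
  have rev : (∫ t₁ in (0:ℝ)..1, ∫ t₂ in (0:ℝ)..1, min t₁ t₂) = 1 / 3 := by
    have e : (∫ t₁ in (0:ℝ)..1, ∫ t₂ in (0:ℝ)..1, min t₁ t₂)
        = ∫ t₁ in (0:ℝ)..1, (t₁ - t₁^2/2) :=
      intervalIntegral.integral_congr min_int
    rw [e, poly]
  have revΔ : (∫ t₁ in (0:ℝ)..1, ∫ t₂ in (0:ℝ)..1, (min t₁ t₂ - Δ)) = 1 / 3 - Δ := by
    have inner : ∀ t₁ ∈ Set.uIcc (0:ℝ) 1, (∫ t₂ in (0:ℝ)..1, (min t₁ t₂ - Δ))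
        = t₁ - t₁^2/2 - Δ := by
      intro t₁ ht
      have ic : IntervalIntegrable (fun t₂ : ℝ => min t₁ t₂) MeasureTheory.volume 0 1 :=
        Continuous.intervalIntegrable (continuous_const.min continuous_id) _ _
      rw [intervalIntegral.integral_sub ic intervalIntegrable_const, min_int t₁ ht]
      simp
    have e : (∫ t₁ in (0:ℝ)..1, ∫ t₂ in (0:ℝ)..1, (min t₁ t₂ - Δ))
        = ∫ t₁ in (0:ℝ)..1, (t₁ - t₁^2/2 - Δ) :=
      intervalIntegral.integral_congr inner
    have i1 : IntervalIntegrable (fun t : ℝ => t - t^2/2) MeasureTheory.volume 0 1 :=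
      intervalIntegrable_id.sub (((continuous_pow 2).div_const 2).intervalIntegrable _ _)
    rw [e, show (fun t₁ : ℝ => t₁ - t₁^2/2 - Δ) = (fun t₁ : ℝ => (t₁ - t₁^2/2) - Δ) from rfl,
      intervalIntegral.integral_sub i1 intervalIntegrable_const, poly]
    simp
  exact ⟨part1, part2, part3, revΔ, rev⟩
end
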